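/- Let J be a convex one-homogeneous functional and let u(t) solve the forward flow u_t = u/‖u‖ - p/‖p‖ with p(t) ∈ ∂J(u(t)), assuming ‖u(t)‖ ≠ 0 and ‖p(t)‖ ≠ 0. Then d/dt J(u(t)) = J(u)/‖u‖ - ‖p‖ ≤ 0, with equality at time t if and only if u(t) is an eigenfunction (p = λu for some λ). -/

import Mathlib

/-! Testing the subgradient inequality at `0`, `2 • u` and `-u` gives Euler's identity
`J u = ⟪p, u⟫ ≥ 0`. Hence `⟪p, u/‖u‖ - p/‖p‖⟫ = J u / ‖u‖ - ‖p‖ ≤ 0` by Cauchy–Schwarz, and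
equality in Cauchy–Schwarz together with `⟪p, u⟫ ≥ 0` means `p` is a multiple of `u`. -/

open RealInnerProductSpace

def IsSubgradient {N : ℕ} (J : EuclideanSpace ℝ (Fin N) → ℝ)
    (u p : EuclideanSpace ℝ (Fin N)) : Prop :=
  ∀ v, J v - J u ≥ ⟪p, v - u⟫

section

variable {E : Type*} [NormedAddCommGroup E] [InnerProductSpace ℝ E]

theorem eq_inner_of_posHomogeneous_of_subgradient {J : E → ℝ}
    (hhom : ∀ α : ℝ, 0 ≤ α → ∀ w, J (α • w) = α * J w) {u p : E}
    (hsub : ∀ v, J v - J u ≥ ⟪p, v - u⟫) : J u = ⟪p, u⟫ := by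
  have hJ0 : J 0 = 0 := by simpa using hhom 0 le_rfl u
  have hJ2 : J ((2 : ℝ) • u) = 2 * J u := hhom 2 zero_le_two u
  have hle := hsub ((2 : ℝ) • u)
  have hge := hsub 0
  rw [hJ2, two_smul, add_sub_cancel_right] at hle
  rw [hJ0, zero_sub, zero_sub, inner_neg_right] at hge
  linarith

theorem inner_nonneg_of_even_of_subgradient {J : E → ℝ} {u p : E} (heven : J (-u) = J u)
    (hsub : ∀ v, J v - J u ≥ ⟪p, v - u⟫) : 0 ≤ ⟪p, u⟫ := by
  have h := hsub (-u)
  rw [heven, sub_self, ← neg_add', inner_neg_right, ← two_smul ℝ u, real_inner_smul_right] at h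
  linarith

theorem real_inner_inv_norm_smul_sub_inv_norm_smul (u p : E) :
    ⟪p, ‖u‖⁻¹ • u - ‖p‖⁻¹ • p⟫ = ⟪p, u⟫ / ‖u‖ - ‖p‖ := by
  rw [inner_sub_right, real_inner_smul_right, real_inner_smul_right,
    real_inner_self_eq_norm_sq, div_eq_inv_mul]
  rcases eq_or_ne ‖p‖ 0 with hp | hp
  · simp [hp]
  · field_simp

theorem real_inner_div_norm_le_norm (u p : E) : ⟪p, u⟫ / ‖u‖ ≤ ‖p‖ :=
  div_le_of_le_mul₀ (norm_nonneg u) (norm_nonneg p) (real_inner_le_norm p u)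

theorem exists_eq_smul_iff_norm_div_norm_smul_eq {u p : E} (hpu : 0 ≤ ⟪p, u⟫) :
    (∃ lam : ℝ, p = lam • u) ↔ (‖p‖ / ‖u‖) • u = p := by
  refine ⟨?_, fun h => ⟨_, h.symm⟩⟩
  rintro ⟨lam, rfl⟩
  rcases eq_or_ne u 0 with rfl | hu
  · simp
  have hlam : 0 ≤ lam := by
    rw [real_inner_smul_left, real_inner_self_eq_norm_sq] at hpu
    exact nonneg_of_mul_nonneg_left hpu (by positivity)
  rw [norm_smul, Real.norm_of_nonneg hlam, mul_div_cancel_right₀ _ (norm_ne_zero_iff.mpr hu)]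

theorem real_inner_div_norm_sub_norm_eq_zero_iff {u p : E} (hu : u ≠ 0) (hpu : 0 ≤ ⟪p, u⟫) :
    ⟪p, u⟫ / ‖u‖ - ‖p‖ = 0 ↔ ∃ lam : ℝ, p = lam • u := by
  rw [exists_eq_smul_iff_norm_div_norm_smul_eq hpu]
  refine Iff.trans ?_ (inner_eq_norm_mul_iff_div hu)
  rw [sub_eq_zero, div_eq_iff (norm_ne_zero_iff.mpr hu), real_inner_comm, mul_comm]
  rfl

end

theorem stmt9_general {N : ℕ} (J : EuclideanSpace ℝ (Fin N) → ℝ)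
    (hhom : ∀ (α : ℝ) (w : EuclideanSpace ℝ (Fin N)), J (α • w) = |α| * J w)
    (u p : ℝ → EuclideanSpace ℝ (Fin N))
    (hp : ∀ t, IsSubgradient J (u t) (p t))
    (hu0 : ∀ t, ‖u t‖ ≠ 0) :
    ∀ t, (⟪p t, (‖u t‖)⁻¹ • u t - (‖p t‖)⁻¹ • p t⟫ = J (u t) / ‖u t‖ - ‖p t‖)
      ∧ ⟪p t, (‖u t‖)⁻¹ • u t - (‖p t‖)⁻¹ • p t⟫ ≤ 0
      ∧ (⟪p t, (‖u t‖)⁻¹ • u t - (‖p t‖)⁻¹ • p t⟫ = 0 ↔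
          ∃ lam : ℝ, p t = lam • u t) := by
  intro t
  have hJ : J (u t) = ⟪p t, u t⟫ :=
    eq_inner_of_posHomogeneous_of_subgradient
      (fun α hα w => by rw [hhom, abs_of_nonneg hα]) (hp t)
  have hpu : 0 ≤ ⟪p t, u t⟫ :=
    inner_nonneg_of_even_of_subgradient (by simpa using hhom (-1) (u t)) (hp t)
  rw [real_inner_inv_norm_smul_sub_inv_norm_smul, hJ]
  exact ⟨rfl, sub_nonpos.mpr (real_inner_div_norm_le_norm _ _),
    real_inner_div_norm_sub_norm_eq_zero_iff (norm_ne_zero_iff.mp (hu0 t)) hpu⟩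

theorem stmt9 {N : ℕ} (J : EuclideanSpace ℝ (Fin N) → ℝ)
    (hconv : ConvexOn ℝ Set.univ J)
    (hhom : ∀ (α : ℝ) (w : EuclideanSpace ℝ (Fin N)), J (α • w) = |α| * J w)
    (u p : ℝ → EuclideanSpace ℝ (Fin N))
    (hp : ∀ t, IsSubgradient J (u t) (p t))
    (hu0 : ∀ t, ‖u t‖ ≠ 0) (hp0 : ∀ t, ‖p t‖ ≠ 0)
    (hflow : ∀ t, HasDerivAt u ((‖u t‖)⁻¹ • u t - (‖p t‖)⁻¹ • p t) t)
    (hchain : ∀ t, HasDerivAt (fun s => J (u s))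
      ⟪p t, (‖u t‖)⁻¹ • u t - (‖p t‖)⁻¹ • p t⟫ t) :
    ∀ t, (⟪p t, (‖u t‖)⁻¹ • u t - (‖p t‖)⁻¹ • p t⟫ = J (u t) / ‖u t‖ - ‖p t‖)
      ∧ ⟪p t, (‖u t‖)⁻¹ • u t - (‖p t‖)⁻¹ • p t⟫ ≤ 0
      ∧ (⟪p t, (‖u t‖)⁻¹ • u t - (‖p t‖)⁻¹ • p t⟫ = 0 ↔
          ∃ lam : ℝ, p t = lam • u t) :=
  stmt9_general J hhom u p hp hu0
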